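/- Let (U_ν)_{ν∈ℕ} be an increasing sequence of open subsets of ℂ with union U, and for each ν let ρ_ν denote the restriction map from holomorphic functions on U_{ν+1} to holomorphic functions on U_ν. Assume each ρ_ν has dense image with respect to the topology of uniform convergence on compact subsets of U_ν. Then for every ν, the restriction map from holomorphic functions on U to holomorphic functions on U_ν has dense image in the same topology. -/

import Mathlib

open Filter Metric Set
open scoped ENNReal Topology

/-- Iterated version of the density hypothesis: one can jump `k` steps. -/
private lemma auxA (U : ℕ → Set ℂ) (hmono : Monotone U)
    (hdense : ∀ ν : ℕ, ∀ f : ℂ → ℂ, DifferentiableOn ℂ f (U ν) →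
      ∀ K ⊆ U ν, IsCompact K → ∀ ε > 0, ∃ g : ℂ → ℂ,
        DifferentiableOn ℂ g (U (ν + 1)) ∧ ∀ x ∈ K, ‖g x - f x‖ < ε) :
    ∀ k ν : ℕ, ∀ f : ℂ → ℂ, DifferentiableOn ℂ f (U ν) →
      ∀ K ⊆ U ν, IsCompact K → ∀ ε > 0, ∃ g : ℂ → ℂ,
        DifferentiableOn ℂ g (U (ν + k)) ∧ ∀ x ∈ K, ‖g x - f x‖ < ε := by
  intro k
  induction k with
  | zero =>
    intro ν f hf K hK hKc ε hε
    exact ⟨f, hf, fun x hx => by simpa using hε⟩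
  | succ k ih =>
    intro ν f hf K hK hKc ε hε
    obtain ⟨g, hg, hgf⟩ := ih ν f hf K hK hKc (ε / 2) (by positivity)
    obtain ⟨h, hh, hhg⟩ := hdense (ν + k) g hg K
      (hK.trans (hmono (Nat.le_add_right ν k))) hKc (ε / 2) (by positivity)
    refine ⟨h, by rwa [Nat.add_succ], fun x hx => ?_⟩
    calc ‖h x - f x‖ ≤ ‖h x - g x‖ + ‖g x - f x‖ := norm_sub_le_norm_sub_add_norm_sub _ _ _
      _ < ε / 2 + ε / 2 := add_lt_add (hhg x hx) (hgf x hx)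
      _ = ε := by ring

/-- If each restriction map between holomorphic functions on an increasing sequence of
open sets `U ν ⊆ ℂ` has dense image for uniform convergence on compacts, then so does
the restriction map from the union. -/
theorem stmt_1 (U : ℕ → Set ℂ) (hopen : ∀ ν, IsOpen (U ν)) (hmono : Monotone U)
    (hdense : ∀ ν : ℕ, ∀ f : ℂ → ℂ, DifferentiableOn ℂ f (U ν) →
      ∀ K ⊆ U ν, IsCompact K → ∀ ε > 0, ∃ g : ℂ → ℂ,
        DifferentiableOn ℂ g (U (ν + 1)) ∧ ∀ x ∈ K, ‖g x - f x‖ < ε) :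
    ∀ ν : ℕ, ∀ f : ℂ → ℂ, DifferentiableOn ℂ f (U ν) →
      ∀ K ⊆ U ν, IsCompact K → ∀ ε > 0, ∃ g : ℂ → ℂ,
        DifferentiableOn ℂ g (⋃ μ, U μ) ∧ ∀ x ∈ K, ‖g x - f x‖ < ε := by
  intro ν f hf K hK hKc ε hε
  set V : Set ℂ := ⋃ μ, U μ with hV
  have hUV : ∀ μ, U μ ⊆ V := fun μ => subset_iUnion U μ
  -- a compact exhaustion of `V`
  set L : ℕ → Set ℂ := fun n =>
    Metric.closedBall 0 n ∩ {x | ((n : ℝ≥0∞) + 1)⁻¹ ≤ EMetric.infEdist x Vᶜ} with hLdef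
  have hLclosed : ∀ n, IsClosed (L n) := fun n =>
    Metric.isClosed_closedBall.inter (IsClosed.preimage EMetric.continuous_infEdist isClosed_Ici)
  have hLc : ∀ n, IsCompact (L n) := fun n =>
    Metric.isCompact_of_isClosed_isBounded (hLclosed n)
      (Metric.isBounded_closedBall.subset inter_subset_left)
  have hLV : ∀ n, L n ⊆ V := by
    intro n x hx
    by_contra hxV
    have h0 : EMetric.infEdist x Vᶜ = 0 := EMetric.infEdist_zero_of_mem hxV
    have := hx.2
    rw [Set.mem_setOf_eq, h0, le_zero_iff] at this
    exact ENNReal.inv_ne_zero.mpr (by simp) this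
  have hLmono : Monotone L := by
    intro n m hnm x hx
    refine ⟨Metric.closedBall_subset_closedBall (by exact_mod_cast hnm) hx.1, ?_⟩
    have hx2 : ((n : ℝ≥0∞) + 1)⁻¹ ≤ EMetric.infEdist x Vᶜ := hx.2
    show ((m : ℝ≥0∞) + 1)⁻¹ ≤ EMetric.infEdist x Vᶜ
    refine le_trans (ENNReal.inv_le_inv.mpr ?_) hx2
    have h1 : (n : ℝ≥0∞) ≤ (m : ℝ≥0∞) := by exact_mod_cast hnm
    exact add_le_add h1 le_rfl
  -- absorption: every compact subset of `V` is inside some `L N`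
  have habs : ∀ C : Set ℂ, IsCompact C → C ⊆ V → ∃ N, C ⊆ L N := by
    intro C hCc hCV
    rcases C.eq_empty_or_nonempty with rfl | hne
    · exact ⟨0, empty_subset _⟩
    obtain ⟨r, hr⟩ := hCc.isBounded.subset_closedBall 0
    obtain ⟨n₁, hn₁⟩ := exists_nat_ge r
    obtain ⟨x₀, hx₀C, hx₀min⟩ := hCc.exists_isMinOn hne EMetric.continuous_infEdist.continuousOn
    have hd0 : EMetric.infEdist x₀ Vᶜ ≠ 0 := by
      intro h0
      have : x₀ ∈ closure Vᶜ := EMetric.mem_closure_iff_infEdist_zero.mpr h0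
      rw [(isOpen_iUnion hopen).isClosed_compl.closure_eq] at this
      exact this (hCV hx₀C)
    obtain ⟨n₂, hn₂⟩ := ENNReal.exists_inv_nat_lt hd0
    refine ⟨max n₁ n₂, fun x hx => ⟨?_, ?_⟩⟩
    · exact Metric.closedBall_subset_closedBall
        (hn₁.trans (by exact_mod_cast le_max_left n₁ n₂)) (hr hx)
    · have hmin : EMetric.infEdist x₀ Vᶜ ≤ EMetric.infEdist x Vᶜ := hx₀min hx
      show (((max n₁ n₂ : ℕ) : ℝ≥0∞) + 1)⁻¹ ≤ EMetric.infEdist x Vᶜ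
      refine le_trans ?_ hmin
      refine le_trans ?_ hn₂.le
      refine ENNReal.inv_le_inv.mpr ?_
      have h1 : (n₂ : ℝ≥0∞) ≤ ((max n₁ n₂ : ℕ) : ℝ≥0∞) := by exact_mod_cast le_max_right n₁ n₂
      exact h1.trans le_self_add
  -- the compacts used in the construction
  set K' : ℕ → Set ℂ := fun n => K ∪ L n with hK'def
  have hK'c : ∀ n, IsCompact (K' n) := fun n => hKc.union (hLc n)
  have hK'V : ∀ n, K' n ⊆ V := fun n => union_subset (hK.trans (hUV ν)) (hLV n)
  have hK'mono : Monotone K' := fun n m h => union_subset_union_right K (hLmono h)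
  -- choose indices with `K' n ⊆ U (m n)`
  have hm : ∀ n, ∃ i, K' n ⊆ U i := fun n =>
    (hK'c n).elim_directed_cover U hopen (hK'V n) hmono.directed_le
  choose m hmspec using hm
  -- the strictly increasing index sequence
  set σ : ℕ → ℕ := fun n => Nat.rec (max ν (m 0)) (fun n ih => max (ih + 1) (m (n + 1))) n
    with hσdef
  have hσsucc : ∀ n, σ (n + 1) = max (σ n + 1) (m (n + 1)) := fun n => rfl
  have hσstrict : StrictMono σ := strictMono_nat_of_lt_succ fun n => by
    rw [hσsucc]; exact lt_of_lt_of_le (Nat.lt_succ_self _) (le_max_left _ _)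
  have hσ0 : ν ≤ σ 0 := le_max_left _ _
  have hσm : ∀ n, m n ≤ σ n := by
    intro n
    cases n with
    | zero => exact le_max_right _ _
    | succ n => rw [hσsucc]; exact le_max_right _ _
  have hK'σ : ∀ n, K' n ⊆ U (σ n) := fun n => (hmspec n).trans (hmono (hσm n))
  have hσge : ∀ n, n ≤ σ n := fun n => hσstrict.le_apply
  -- the initial approximation
  obtain ⟨g₀, hg₀, hg₀f⟩ := auxA U hmono hdense (σ 0 - ν) ν f hf K hK hKc (ε / 2) (by positivity)
  rw [Nat.add_sub_cancel' hσ0] at hg₀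
  -- the recursive step
  have step : ∀ n (h : ℂ → ℂ), DifferentiableOn ℂ h (U (σ n)) → ∃ h' : ℂ → ℂ,
      DifferentiableOn ℂ h' (U (σ (n + 1))) ∧ ∀ x ∈ K' n, ‖h' x - h x‖ < ε / 2 ^ (n + 2) := by
    intro n h hh
    obtain ⟨h', hh', hb⟩ := auxA U hmono hdense (σ (n + 1) - σ n) (σ n) h hh (K' n)
      (hK'σ n) (hK'c n) (ε / 2 ^ (n + 2)) (by positivity)
    rw [Nat.add_sub_cancel' (hσstrict (Nat.lt_succ_self n)).le] at hh'
    exact ⟨h', hh', hb⟩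
  -- the sequence of approximations
  let G : (n : ℕ) → {h : ℂ → ℂ // DifferentiableOn ℂ h (U (σ n))} := fun n =>
    Nat.rec ⟨g₀, hg₀⟩ (fun n p =>
      ⟨(step n p.1 p.2).choose, (step n p.1 p.2).choose_spec.1⟩) n
  have hGstep : ∀ n, ∀ x ∈ K' n, ‖(G (n + 1)).1 x - (G n).1 x‖ < ε / 2 ^ (n + 2) :=
    fun n => (step n (G n).1 (G n).2).choose_spec.2
  have hG0 : (G 0).1 = g₀ := rfl
  -- telescoping tail estimate
  have htail : ∀ N n, N ≤ n → ∀ p, n ≤ p → ∀ x ∈ K' N,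
      ‖(G p).1 x - (G n).1 x‖ ≤ ε / 2 ^ (n + 1) - ε / 2 ^ (p + 1) := by
    intro N n hNn p hp
    induction p, hp using Nat.le_induction with
    | base => intro x _; simp
    | succ p hnp ih =>
      intro x hx
      have hxp : x ∈ K' p := hK'mono (hNn.trans hnp) hx
      calc ‖(G (p + 1)).1 x - (G n).1 x‖
          ≤ ‖(G (p + 1)).1 x - (G p).1 x‖ + ‖(G p).1 x - (G n).1 x‖ :=
            norm_sub_le_norm_sub_add_norm_sub _ _ _
        _ ≤ ε / 2 ^ (p + 2) + (ε / 2 ^ (n + 1) - ε / 2 ^ (p + 1)) :=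
            add_le_add (hGstep p x hxp).le (ih x hx)
        _ = ε / 2 ^ (n + 1) - ε / 2 ^ (p + 1 + 1) := by
            rw [show p + 1 + 1 = p + 2 from rfl]; field_simp; ring
  have hpowpos : ∀ n : ℕ, (0:ℝ) < ε / 2 ^ (n + 1) := fun n => by positivity
  have hpow0 : Tendsto (fun n : ℕ => ε / 2 ^ (n + 1)) atTop (𝓝 0) := by
    have h1 : Tendsto (fun n : ℕ => ((1 : ℝ) / 2) ^ n) atTop (𝓝 0) :=
      tendsto_pow_atTop_nhds_zero_of_lt_one (by norm_num) (by norm_num)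
    have h2 := (h1.const_mul ε).comp (tendsto_add_atTop_nat 1)
    simp only [mul_zero] at h2
    convert h2 using 2 with n
    simp [Function.comp, div_pow, div_eq_mul_inv, mul_comm]
  -- pointwise convergence
  have hcauchy : ∀ x ∈ V, CauchySeq fun n => (G n).1 x := by
    intro x hx
    obtain ⟨N₀, hN₀⟩ := habs {x} isCompact_singleton (singleton_subset_iff.mpr hx)
    have hxK' : x ∈ K' N₀ := Or.inr (hN₀ rfl)
    rw [Metric.cauchySeq_iff']
    intro δ hδ
    obtain ⟨n₀, hn₀⟩ := (hpow0.eventually (eventually_lt_nhds hδ)).exists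
    refine ⟨max N₀ n₀, fun n hn => ?_⟩
    have h1 : N₀ ≤ max N₀ n₀ := le_max_left _ _
    have h2 := htail N₀ (max N₀ n₀) h1 n hn x hxK'
    rw [dist_eq_norm]
    calc ‖(G n).1 x - (G (max N₀ n₀)).1 x‖
        ≤ ε / 2 ^ (max N₀ n₀ + 1) - ε / 2 ^ (n + 1) := h2
      _ < ε / 2 ^ (max N₀ n₀ + 1) := by linarith [hpowpos n]
      _ ≤ ε / 2 ^ (n₀ + 1) := by
          apply div_le_div_of_nonneg_left hε.le (by positivity)
          exact pow_le_pow_right₀ (by norm_num) (by omega)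
      _ < δ := hn₀
  set g : ℂ → ℂ := fun x => limUnder atTop fun n => (G n).1 x with hgdef
  have hconv : ∀ x ∈ V, Tendsto (fun n => (G n).1 x) atTop (𝓝 (g x)) :=
    fun x hx => (hcauchy x hx).tendsto_limUnder
  -- uniform limit estimate
  have hlim : ∀ N n, N ≤ n → ∀ x ∈ K' N, ‖g x - (G n).1 x‖ ≤ ε / 2 ^ (n + 1) := by
    intro N n hNn x hx
    have hxV : x ∈ V := hK'V N hx
    have hT : Tendsto (fun p => ‖(G p).1 x - (G n).1 x‖) atTop (𝓝 ‖g x - (G n).1 x‖) :=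
      ((hconv x hxV).sub tendsto_const_nhds).norm
    refine le_of_tendsto hT ?_
    filter_upwards [eventually_ge_atTop n] with p hp
    calc ‖(G p).1 x - (G n).1 x‖ ≤ ε / 2 ^ (n + 1) - ε / 2 ^ (p + 1) := htail N n hNn p hp x hx
      _ ≤ ε / 2 ^ (n + 1) := by linarith [hpowpos p]
  -- `g` is holomorphic on each `U (σ q)`
  have hdiffσ : ∀ q : ℕ, DifferentiableOn ℂ g (U (σ q)) := by
    intro q
    refine TendstoLocallyUniformlyOn.differentiableOn (φ := atTop) (F := fun k => (G (k + q)).1)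
      ?_ ?_ (hopen _)
    · rw [tendstoLocallyUniformlyOn_iff_forall_isCompact (hopen _)]
      intro C hC hCc
      obtain ⟨N, hN⟩ := habs C hCc (hC.trans (hUV _))
      rw [Metric.tendstoUniformlyOn_iff]
      intro δ hδ
      obtain ⟨n₀, hn₀⟩ := (hpow0.eventually (eventually_lt_nhds hδ)).exists
      filter_upwards [eventually_ge_atTop (max N n₀)] with k hk
      intro x hx
      have hxK' : x ∈ K' N := Or.inr (hN hx)
      have hkN : N ≤ k + q := le_trans (le_max_left _ _) (hk.trans (Nat.le_add_right k q))
      rw [dist_eq_norm]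
      calc ‖g x - (G (k + q)).1 x‖ ≤ ε / 2 ^ (k + q + 1) := hlim N (k + q) hkN x hxK'
        _ ≤ ε / 2 ^ (n₀ + 1) := by
            apply div_le_div_of_nonneg_left hε.le (by positivity)
            apply pow_le_pow_right₀ (by norm_num)
            omega
        _ < δ := hn₀
    · refine Eventually.of_forall fun k => ((G (k + q)).2).mono ?_
      exact hmono (hσstrict.monotone (Nat.le_add_left q k))
  refine ⟨g, ?_, ?_⟩
  · intro x hx
    obtain ⟨μ, hxs⟩ := mem_iUnion.mp hx
    have hxσ : x ∈ U (σ μ) := hmono (hσge μ) hxs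
    exact ((hdiffσ μ).differentiableAt ((hopen _).mem_nhds hxσ)).differentiableWithinAt
  · intro x hx
    have hxK' : x ∈ K' 0 := Or.inl hx
    calc ‖g x - f x‖ ≤ ‖g x - (G 0).1 x‖ + ‖(G 0).1 x - f x‖ :=
          norm_sub_le_norm_sub_add_norm_sub _ _ _
      _ < ε / 2 ^ (0 + 1) + ε / 2 := add_lt_add_of_le_of_lt (hlim 0 0 le_rfl x hxK')
          (by rw [hG0]; exact hg₀f x hx)
      _ = ε := by norm_num
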